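/- For m-Dyck paths P ∈ Dyck^m_{n1} and Q = Q_1 ×_0 ... ×_0 Q_r ∈ Dyck^m_{n2} with the Q_i prime, and weak compositions λ, γ of L(P) of length r+1, one has λ_j + ... + λ_r ≤ γ_j + ... + γ_r for all 1 ≤ j ≤ r if and only if P *_λ Q ≤ P *_γ Q in the m-Tamari order. -/

import Mathlib

def stepVal (m : ℕ) (b : Bool) : ℤ := if b then (m : ℤ) else -1

def pathSum (m : ℕ) (P : List Bool) : ℤ := (P.map (stepVal m)).sum

def IsDyck (m : ℕ) (P : List Bool) : Prop :=
  pathSum m P = 0 ∧ ∀ Q : List Bool, Q <+: P → 0 ≤ pathSum m Q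

def IsPrimePath (m : ℕ) (P : List Bool) : Prop :=
  P ≠ [] ∧ ¬ ∃ Q R : List Bool, Q ≠ [] ∧ R ≠ [] ∧ IsDyck m Q ∧ IsDyck m R ∧ P = Q ++ R

def Ltop (P : List Bool) : ℕ := (P.reverse.takeWhile (fun b => !b)).length

def concatAt (P Q : List Bool) (j : ℕ) : List Bool :=
  P.take (P.length - j) ++ Q ++ List.replicate j false

def TamariCovers (m : ℕ) (P P' : List Bool) : Prop :=
  ∃ A E B : List Bool, IsDyck m E ∧ E ≠ [] ∧
    (∀ E₁ E₂ : List Bool, E = E₁ ++ E₂ → E₁ ≠ [] → E₂ ≠ [] → ¬ IsDyck m E₁) ∧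
    P = A ++ false :: (E ++ B) ∧ P' = A ++ E ++ false :: B

/-- The `m`-Tamari order. -/
def TamariLE (m : ℕ) : List Bool → List Bool → Prop :=
  Relation.ReflTransGen (TamariCovers m)

/-- `P *_λ Q₁×₀…×₀Q_r`, given the list of pairs `[(λ_1,Q_1), …, (λ_r,Q_r)]`:
`((P ×_{λ_1+⋯+λ_r} Q_1) ×_{λ_2+⋯+λ_r} Q_2) ⋯ ×_{λ_r} Q_r`. -/
def starLam (P : List Bool) : List (ℕ × List Bool) → List Bool
  | [] => P
  | (a, Q) :: rest => starLam (concatAt P Q (a + (rest.map Prod.fst).sum)) rest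

/-! Write `P = C d^{L(P)}`, so that `P *_λ Q = C d^{λ₀} Q₁ d^{λ₁} ⋯ Qᵣ d^{λᵣ}`.
If the suffix sums of `λ` are dominated by those of `γ`, then `γ₀ ≤ λ₀`, and moving `λ₀ - γ₀`
down steps one at a time past the prime excursion `Q₁` is a chain of covering relations; the
surplus joins `λ₁` and one continues with `Q₂, …, Qᵣ`.
Conversely, a covering relation only raises the height of every prefix. If
`λ_j + ⋯ + λ_r > γ_j + ⋯ + γ_r`, then `P *_λ Q` finishes the block `d^{λ_{j-1}}` before `P *_γ Q`
finishes `d^{γ_{j-1}}`, and at the latter moment it is already inside or past `Q_j`, hence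
strictly higher. -/

@[simp] lemma pathSum_nil (m : ℕ) : pathSum m [] = 0 := rfl

@[simp] lemma pathSum_cons (m : ℕ) (b : Bool) (X : List Bool) :
    pathSum m (b :: X) = stepVal m b + pathSum m X := by
  simp [pathSum]

@[simp] lemma pathSum_append (m : ℕ) (X Y : List Bool) :
    pathSum m (X ++ Y) = pathSum m X + pathSum m Y := by
  simp [pathSum]

@[simp] lemma pathSum_replicate_false (m k : ℕ) :
    pathSum m (List.replicate k false) = -(k : ℤ) := by
  induction k with
  | zero => rfl
  | succ k ih => simp [List.replicate_succ, ih, stepVal]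

lemma pathSum_add_length (m : ℕ) (X : List Bool) :
    pathSum m X + X.length = (m + 1) * X.count true := by
  induction X with
  | nil => simp
  | cons b X ih => cases b <;> simp [stepVal] <;> linarith

lemma neg_length_le_pathSum (m : ℕ) (X : List Bool) : -(X.length : ℤ) ≤ pathSum m X := by
  have := pathSum_add_length m X
  have : (0 : ℤ) ≤ (m + 1) * X.count true := by positivity
  linarith

lemma pathSum_take_append (m : ℕ) (X Y : List Bool) (t : ℕ) :
    pathSum m ((X ++ Y).take t) = pathSum m (X.take t) + pathSum m (Y.take (t - X.length)) := by
  rw [List.take_append, pathSum_append]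

lemma IsDyck.of_append {m : ℕ} {X Y : List Bool} (hXY : IsDyck m (X ++ Y)) (hX : IsDyck m X) :
    IsDyck m Y := by
  refine ⟨by linarith [hXY.1, hX.1, pathSum_append m X Y], fun T ⟨S, hT⟩ => ?_⟩
  have := hXY.2 (X ++ T) ⟨S, by rw [List.append_assoc, hT]⟩
  rwa [pathSum_append, hX.1, zero_add] at this

lemma IsDyck.neg_lt_pathSum_take {m : ℕ} {Q : List Bool} (hQ : IsDyck m Q) (hQne : Q ≠ [])
    (R : List Bool) {d : ℕ} (hd : 0 < d) : -(d : ℤ) < pathSum m ((Q ++ R).take d) := by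
  rw [pathSum_take_append]
  rcases le_or_gt d Q.length with hdQ | hQd
  · have := hQ.2 _ (List.take_prefix d Q)
    rw [Nat.sub_eq_zero_of_le hdQ]
    simp only [List.take_zero, pathSum_nil]
    omega
  · have hQpos : 0 < Q.length := List.length_pos_iff.mpr hQne
    have := neg_length_le_pathSum m (R.take (d - Q.length))
    rw [List.take_of_length_le hQd.le, hQ.1, List.length_take] at *
    omega

lemma exists_eq_append_replicate_Ltop (P : List Bool) :
    ∃ C, P = C ++ List.replicate (Ltop P) false := by
  refine ⟨(P.reverse.dropWhile (fun b => !b)).reverse, ?_⟩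
  have hdowns : P.reverse.takeWhile (fun b => !b) = List.replicate (Ltop P) false :=
    List.eq_replicate_of_mem fun b hb => by simpa using List.mem_takeWhile_imp hb
  conv_lhs =>
    rw [← P.reverse_reverse, ← List.takeWhile_append_dropWhile (p := fun b => !b) (l := P.reverse)]
  rw [List.reverse_append, hdowns, List.reverse_replicate]

def HeightLE (m : ℕ) (W W' : List Bool) : Prop :=
  ∀ t, pathSum m (W.take t) ≤ pathSum m (W'.take t)

namespace HeightLE

variable {m : ℕ} {W W' W'' : List Bool}

lemma refl (W : List Bool) : HeightLE m W W := fun _ => le_rfl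

lemma trans (h : HeightLE m W W') (h' : HeightLE m W' W'') : HeightLE m W W'' :=
  fun t => (h t).trans (h' t)

lemma append_left (h : HeightLE m W W') (A : List Bool) : HeightLE m (A ++ W) (A ++ W') := by
  intro t
  simpa only [pathSum_take_append, add_le_add_iff_left] using h (t - A.length)

lemma of_append_left {A : List Bool} (h : HeightLE m (A ++ W) (A ++ W')) : HeightLE m W W' := by
  intro t
  simpa only [List.take_length_add_append, pathSum_append, add_le_add_iff_left] using
    h (A.length + t)

lemma append_right (h : HeightLE m W W') (hlen : W.length = W'.length) (B : List Bool) :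
    HeightLE m (W ++ B) (W' ++ B) := by
  intro t
  simpa only [pathSum_take_append, hlen, add_le_add_iff_right] using h t

end HeightLE

lemma heightLE_false_cons (m : ℕ) (E : List Bool) : HeightLE m (false :: E) (E ++ [false]) := by
  induction E with
  | nil => exact HeightLE.refl _
  | cons e E ih =>
    rintro (_ | _ | t)
    · rfl
    · cases e <;> simp [stepVal]
    · have := ih (t + 1)
      simp only [List.take_succ_cons, pathSum_cons, List.cons_append] at this ⊢
      linarith

lemma TamariCovers.heightLE {m : ℕ} {W W' : List Bool} (h : TamariCovers m W W') :
    HeightLE m W W' := by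
  obtain ⟨A, E, B, -, -, -, rfl, rfl⟩ := h
  have := ((heightLE_false_cons m E).append_right (by simp) B).append_left A
  simpa using this

lemma TamariLE.heightLE {m : ℕ} {W W' : List Bool} (h : TamariLE m W W') : HeightLE m W W' := by
  induction h with
  | refl => exact HeightLE.refl _
  | tail _ hcov ih => exact ih.trans hcov.heightLE

/-- Equal numbers of up steps force the lower path to reach `X'` later than `X`, by exactly the
height difference; a nonempty Dyck path after `X` keeps it strictly above that height. -/
lemma pathSum_le_of_heightLE {m : ℕ} {X X' Q R R' : List Bool}
    (hup : X.count true = X'.count true) (hQ : IsDyck m Q) (hQne : Q ≠ [])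
    (h : HeightLE m (X ++ Q ++ R) (X' ++ R')) : pathSum m X ≤ pathSum m X' := by
  by_contra! hlt
  have hlen := pathSum_add_length m X
  have hlen' := pathSum_add_length m X'
  rw [hup] at hlen
  obtain ⟨d, hd⟩ : ∃ d, X'.length = X.length + d := ⟨X'.length - X.length, by omega⟩
  have hbelow := h X'.length
  rw [List.take_left, hd, List.append_assoc, List.take_length_add_append, pathSum_append] at hbelow
  have habove := hQ.neg_lt_pathSum_take hQne R (d := d) (by omega)
  rw [hd] at hlen'
  push_cast at hlen'
  linarith

/-- `blocks [λ₀, …, λᵣ] ([] :: [Q₁, …, Qᵣ])` is the path `d^λ₀ Q₁ d^λ₁ ⋯ Qᵣ d^λᵣ`. -/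
def blocks : List ℕ → List (List Bool) → List Bool
  | a :: lam, Q :: Qs => Q ++ List.replicate a false ++ blocks lam Qs
  | _, _ => []

@[simp] lemma blocks_cons_cons (a : ℕ) (lam : List ℕ) (Q : List Bool) (Qs : List (List Bool)) :
    blocks (a :: lam) (Q :: Qs) = Q ++ List.replicate a false ++ blocks lam Qs := rfl

lemma concatAt_append_replicate (X Q : List Bool) (j : ℕ) :
    concatAt (X ++ List.replicate j false) Q j = X ++ Q ++ List.replicate j false := by
  simp [concatAt]

lemma starLam_append_replicate (X : List Bool) (lam : List ℕ) (Qs : List (List Bool))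
    (hlen : lam.length = Qs.length) :
    starLam (X ++ List.replicate lam.sum false) (lam.zip Qs) = X ++ blocks lam Qs := by
  induction lam generalizing X Qs with
  | nil => simp [starLam, blocks]
  | cons a lam ih =>
    obtain _ | ⟨Q, Qs⟩ := Qs
    · simp at hlen
    · have hlen : lam.length = Qs.length := by simpa using hlen
      rw [List.zip_cons_cons, starLam, List.map_fst_zip hlen.le, List.sum_cons,
        concatAt_append_replicate, List.replicate_add, ← List.append_assoc, ih _ _ hlen]
      simp

lemma starLam_tail_zip {P C : List Bool} {lam : List ℕ} {Qs : List (List Bool)}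
    (hP : P = C ++ List.replicate lam.sum false) (hlen : lam.length = Qs.length + 1) :
    starLam P (lam.tail.zip Qs) = C ++ blocks lam ([] :: Qs) := by
  obtain _ | ⟨a, lam⟩ := lam
  · simp at hlen
  · rw [hP, List.sum_cons, List.replicate_add, ← List.append_assoc, List.tail_cons,
      starLam_append_replicate _ _ _ (by simpa using hlen)]
    simp

lemma exists_blocks_eq_append {m : ℕ} {Qs : List (List Bool)} (hQ : ∀ Q ∈ Qs, pathSum m Q = 0)
    {lam : List ℕ} (hlen : lam.length = Qs.length) {j : ℕ} (hj : j < Qs.length) :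
    ∃ X R, blocks lam Qs = X ++ Qs[j] ++ R ∧
      X.count true = ((Qs.take j).map (List.count true)).sum ∧
      pathSum m X = -((lam.take j).sum : ℤ) := by
  induction Qs generalizing lam j with
  | nil => simp at hj
  | cons Q Qs ih =>
    obtain _ | ⟨a, lam⟩ := lam
    · simp at hlen
    obtain _ | j := j
    · exact ⟨[], List.replicate a false ++ blocks lam Qs, by simp, by simp, by simp⟩
    · obtain ⟨X, R, hblocks, hup, hheight⟩ := ih (fun Q' hQ' => hQ Q' (by simp [hQ']))
        (by simpa using hlen) (by simpa using hj)
      refine ⟨Q ++ List.replicate a false ++ X, R, by simp [hblocks],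
        by simp [hup, List.count_replicate], ?_⟩
      simp [hheight, hQ Q (by simp)]
      ring

lemma TamariLE.append_left {m : ℕ} {W W' : List Bool} (h : TamariLE m W W') (A : List Bool) :
    TamariLE m (A ++ W) (A ++ W') := by
  induction h with
  | refl => exact .refl
  | tail _ hcov ih =>
    obtain ⟨A', E, B, hE, hEne, hEprime, rfl, rfl⟩ := hcov
    exact ih.tail ⟨A ++ A', E, B, hE, hEne, hEprime, by simp, by simp⟩

lemma tamariCovers_of_isPrimePath {m : ℕ} {Q : List Bool} (hQ : IsDyck m Q)
    (hQprime : IsPrimePath m Q) (A B : List Bool) :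
    TamariCovers m (A ++ false :: (Q ++ B)) (A ++ Q ++ false :: B) := by
  refine ⟨A, Q, B, hQ, hQprime.1, ?_, rfl, rfl⟩
  rintro E₁ E₂ rfl hE₁ hE₂ hE₁Dyck
  exact hQprime.2 ⟨E₁, E₂, hE₁, hE₂, hE₁Dyck, hQ.of_append hE₁Dyck, rfl⟩

lemma tamariLE_replicate_false_append {m : ℕ} {Q : List Bool} (hQ : IsDyck m Q)
    (hQprime : IsPrimePath m Q) (k : ℕ) (B : List Bool) :
    TamariLE m (List.replicate k false ++ Q ++ B) (Q ++ List.replicate k false ++ B) := by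
  induction k generalizing B with
  | zero => simpa using .refl
  | succ k ih =>
    have hmove := tamariCovers_of_isPrimePath hQ hQprime [] (List.replicate k false ++ B)
    have hrest := (ih B).append_left [false]
    simp only [List.replicate_succ, List.nil_append, List.cons_append,
      List.append_assoc] at hmove hrest ⊢
    exact hrest.tail hmove

lemma tamariLE_blocks {m : ℕ} {Qs : List (List Bool)} (hQ : ∀ Q ∈ Qs, IsDyck m Q ∧ IsPrimePath m Q)
    {lam gam : List ℕ} (hlam : lam.length = Qs.length + 1) (hgam : gam.length = Qs.length + 1)
    (hsum : lam.sum = gam.sum)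
    (hdom : ∀ j, 1 ≤ j → j ≤ Qs.length → (lam.drop j).sum ≤ (gam.drop j).sum) :
    TamariLE m (blocks lam ([] :: Qs)) (blocks gam ([] :: Qs)) := by
  induction Qs generalizing lam gam with
  | nil =>
    obtain ⟨a, rfl⟩ := List.length_eq_one_iff.mp hlam
    obtain ⟨b, rfl⟩ := List.length_eq_one_iff.mp hgam
    obtain rfl : a = b := by simpa using hsum
    exact .refl
  | cons Q Qs ih =>
    obtain _ | ⟨a, _ | ⟨c, lam⟩⟩ := lam <;> simp at hlam
    obtain _ | ⟨b, _ | ⟨d, gam⟩⟩ := gam <;> simp at hgam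
    have hQ' : IsDyck m Q ∧ IsPrimePath m Q := hQ Q (by simp)
    have hdom₁ := hdom 1 le_rfl (by simp)
    simp only [List.sum_cons, List.drop_succ_cons, List.drop_zero] at hsum hdom₁
    have hba : b ≤ a := by omega
    have hmove := (tamariLE_replicate_false_append hQ'.1 hQ'.2 (a - b)
      (List.replicate c false ++ blocks lam Qs)).append_left (List.replicate b false)
    have htail := (ih (fun Q' hQ'' => hQ Q' (by simp [hQ''])) (lam := (a - b + c) :: lam)
      (gam := d :: gam) (by simpa using hlam) (by simpa using hgam) (by simp; omega)
      (fun j hj₁ hj => by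
        obtain ⟨j, rfl⟩ := Nat.exists_eq_add_of_le' hj₁
        simpa using hdom (j + 2) (by omega) (by simpa using hj))).append_left
        (List.replicate b false ++ Q)
    have hsplit : List.replicate a false = List.replicate b false ++ List.replicate (a - b) false := by
      rw [← List.replicate_add, Nat.add_sub_cancel' hba]
    simp only [blocks_cons_cons, List.nil_append, List.replicate_add, List.append_assoc,
      hsplit] at hmove htail ⊢
    exact hmove.trans htail

lemma sum_drop_le_of_heightLE_blocks {m : ℕ} {Qs : List (List Bool)}
    (hQ : ∀ Q ∈ Qs, IsDyck m Q ∧ Q ≠ []) {lam gam : List ℕ}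
    (hlam : lam.length = Qs.length + 1) (hgam : gam.length = Qs.length + 1)
    (hsum : lam.sum = gam.sum) (h : HeightLE m (blocks lam ([] :: Qs)) (blocks gam ([] :: Qs)))
    {j : ℕ} (hj₁ : 1 ≤ j) (hj : j ≤ Qs.length) : (lam.drop j).sum ≤ (gam.drop j).sum := by
  obtain ⟨i, rfl⟩ := Nat.exists_eq_add_of_le' hj₁
  have hflat : ∀ Q ∈ ([] :: Qs), pathSum m Q = 0 := by
    simpa using fun Q hQQ => (hQ Q hQQ).1.1
  obtain ⟨X, R, hX, hXup, hXheight⟩ :=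
    exists_blocks_eq_append hflat (by simpa using hlam) (j := i + 1) (by simp; omega)
  obtain ⟨X', R', hX', hXup', hXheight'⟩ :=
    exists_blocks_eq_append hflat (by simpa using hgam) (j := i + 1) (by simp; omega)
  have hQi := hQ Qs[i] (List.getElem_mem _)
  rw [hX, hX', List.getElem_cons_succ, List.append_assoc X'] at h
  have hle := pathSum_le_of_heightLE (hXup.trans hXup'.symm) hQi.1 hQi.2 h
  have := List.sum_take_add_sum_drop lam (i + 1)
  have := List.sum_take_add_sum_drop gam (i + 1)
  omega

theorem starLam_tamari_le_general (m : ℕ) (P : List Bool)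
    (Qs : List (List Bool))
    (hQ : ∀ Q ∈ Qs, IsDyck m Q ∧ IsPrimePath m Q)
    (lam gam : List ℕ)
    (hlamlen : lam.length = Qs.length + 1) (hgamlen : gam.length = Qs.length + 1)
    (hlamsum : lam.sum = Ltop P) (hgamsum : gam.sum = Ltop P) :
    (∀ j, 1 ≤ j → j ≤ Qs.length → (lam.drop j).sum ≤ (gam.drop j).sum)
      ↔ TamariLE m (starLam P (lam.tail.zip Qs)) (starLam P (gam.tail.zip Qs)) := by
  obtain ⟨C, hC⟩ := exists_eq_append_replicate_Ltop P
  rw [starLam_tail_zip (hlamsum ▸ hC) hlamlen, starLam_tail_zip (hgamsum ▸ hC) hgamlen]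
  have hsum : lam.sum = gam.sum := hlamsum.trans hgamsum.symm
  constructor
  · intro hdom
    exact (tamariLE_blocks hQ hlamlen hgamlen hsum hdom).append_left C
  · intro h j hj₁ hj
    exact sum_drop_le_of_heightLE_blocks (fun Q hQQ => ⟨(hQ Q hQQ).1, (hQ Q hQQ).2.1⟩)
      hlamlen hgamlen hsum h.heightLE.of_append_left hj₁ hj

/-- For weak compositions `λ, γ` of `L(P)` of length `r+1`,
`λ_j + ⋯ + λ_r ≤ γ_j + ⋯ + γ_r` for all `1 ≤ j ≤ r` iff
`P *_λ Q ≤ P *_γ Q` in the `m`-Tamari order. -/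
theorem starLam_tamari_le (m : ℕ) (hm : 1 ≤ m) (P : List Bool) (hP : IsDyck m P)
    (Qs : List (List Bool)) (hQne : Qs ≠ [])
    (hQ : ∀ Q ∈ Qs, IsDyck m Q ∧ IsPrimePath m Q)
    (lam gam : List ℕ)
    (hlamlen : lam.length = Qs.length + 1) (hgamlen : gam.length = Qs.length + 1)
    (hlamsum : lam.sum = Ltop P) (hgamsum : gam.sum = Ltop P) :
    (∀ j, 1 ≤ j → j ≤ Qs.length → (lam.drop j).sum ≤ (gam.drop j).sum)
      ↔ TamariLE m (starLam P (lam.tail.zip Qs)) (starLam P (gam.tail.zip Qs)) :=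
  starLam_tamari_le_general m P Qs hQ lam gam hlamlen hgamlen hlamsum hgamsum
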